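/- arXiv:1703.10001 — 2 statements merged into one kernel-verified Lean document; each statement's English description precedes it below -/
import Mathlib

section
/- Let χ(m) = Ψ(∫φ₁ dm, …, ∫φ_N dm) where each φᵢ is K_φ-Lipschitz and Ψ : ℝᴺ → ℝ has a K_{DΨ}-Lipschitz derivative. Then with Dχ(m, x) = ∑ᵢ ∂_{yᵢ}Ψ(∫φ₁dm,…,∫φ_N dm) φᵢ(x), for all probability measures m₁, m₂, m₃, m₄ with finite first moments: |(Dχ(m₂) − Dχ(m₁))(m₄ − m₃)| ≤ K_{DΨ} K_φ² d₁(m₁,m₂) d₁(m₃,m₄). -/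
/-!
Write `Φ x = (φ₁ x, …, φ_N x)`, which is `K_φ`-Lipschitz, and `bⱼ = ∫ Φ dmⱼ`.
Since `DΨ(a)` is linear, `∫ Dχ(m, x) dm' = DΨ(∫ Φ dm)(∫ Φ dm')`, so the left-hand side
is `(DΨ(b₂) - DΨ(b₁))(b₄ - b₃)`. Integrating a Lipschitz map against a coupling gives
`‖bⱼ - bᵢ‖ ≤ K_φ d₁(mᵢ, mⱼ)`, and the Lipschitz bound on `DΨ` does the rest.
-/

open MeasureTheory NNReal

/-- The 1-Wasserstein distance, defined as the infimum of transportation costs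
over couplings. -/
noncomputable def W1 {E : Type*} [MeasurableSpace E] [PseudoMetricSpace E]
    (m₁ m₂ : MeasureTheory.Measure E) : ℝ :=
  sInf {r : ℝ | ∃ π : MeasureTheory.Measure (E × E),
    π.map Prod.fst = m₁ ∧ π.map Prod.snd = m₂ ∧ r = ∫ p, dist p.1 p.2 ∂π}

theorem LipschitzWith.pi {ι α : Type*} {β : ι → Type*} [Fintype ι] [PseudoEMetricSpace α]
    [∀ i, PseudoEMetricSpace (β i)] {K : ℝ≥0} {f : ∀ i, α → β i}
    (hf : ∀ i, LipschitzWith K (f i)) : LipschitzWith K (fun x i => f i x) :=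
  fun x y => edist_pi_le_iff.2 fun i => hf i x y

theorem W1_nonneg {E : Type*} [MeasurableSpace E] [PseudoMetricSpace E] (m m' : Measure E) :
    0 ≤ W1 m m' :=
  Real.sInf_nonneg fun _ ⟨_, _, _, hr⟩ => hr ▸ integral_nonneg fun _ => dist_nonneg

theorem le_mul_W1_of_forall_coupling {E : Type*} [MeasurableSpace E] [PseudoMetricSpace E]
    {m m' : Measure E} [IsProbabilityMeasure m] [IsProbabilityMeasure m'] {K : ℝ≥0} {c : ℝ}
    (hc : ∀ π : Measure (E × E), π.map Prod.fst = m → π.map Prod.snd = m' →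
      c ≤ K * ∫ p, dist p.1 p.2 ∂π) :
    c ≤ K * W1 m m' := by
  rw [W1, ← smul_eq_mul, ← Real.sInf_smul_of_nonneg K.coe_nonneg]
  refine le_csInf (Set.Nonempty.smul_set ⟨_, m.prod m', by simp, by simp, rfl⟩) ?_
  rintro _ ⟨_, ⟨π, h₁, h₂, rfl⟩, rfl⟩
  exact hc π h₁ h₂

section Wasserstein

variable {E G : Type*} [SeminormedAddCommGroup E] [MeasurableSpace E] [OpensMeasurableSpace E]
  [SecondCountableTopology E] [NormedAddCommGroup G]
  {K : ℝ≥0} {f : E → G} {m m' : Measure E} {π : Measure (E × E)}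

theorem LipschitzWith.integrable_of_integrable_norm (hf : LipschitzWith K f) [IsFiniteMeasure m]
    (hm : Integrable (fun x => ‖x‖) m) : Integrable f m := by
  refine ((integrable_const ‖f 0‖).add (hm.const_mul K)).mono'
    hf.continuous.aestronglyMeasurable (.of_forall fun x => ?_)
  calc ‖f x‖ ≤ ‖f 0‖ + ‖f x - f 0‖ := norm_le_norm_add_norm_sub' _ _
    _ ≤ ‖f 0‖ + K * ‖x‖ := by
      gcongr
      simpa using hf.norm_sub_le x 0

theorem integrable_dist_of_map_fst_snd (h₁ : π.map Prod.fst = m) (h₂ : π.map Prod.snd = m')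
    (hm : Integrable (fun x => ‖x‖) m) (hm' : Integrable (fun x => ‖x‖) m') :
    Integrable (fun p : E × E => dist p.1 p.2) π := by
  have hfst : Integrable (fun p : E × E => ‖p.1‖) π :=
    (h₁ ▸ hm).comp_measurable measurable_fst
  have hsnd : Integrable (fun p : E × E => ‖p.2‖) π :=
    (h₂ ▸ hm').comp_measurable measurable_snd
  refine (hfst.add hsnd).mono' continuous_dist.aestronglyMeasurable (.of_forall fun p => ?_)
  rw [Real.norm_of_nonneg dist_nonneg]
  exact dist_le_norm_add_norm _ _

variable [NormedSpace ℝ G]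

theorem LipschitzWith.norm_integral_sub_le_of_map_fst_snd (hf : LipschitzWith K f)
    [IsFiniteMeasure m] [IsFiniteMeasure m'] (hm : Integrable (fun x => ‖x‖) m)
    (hm' : Integrable (fun x => ‖x‖) m') (h₁ : π.map Prod.fst = m)
    (h₂ : π.map Prod.snd = m') :
    ‖∫ x, f x ∂m' - ∫ x, f x ∂m‖ ≤ K * ∫ p, dist p.1 p.2 ∂π := by
  have hf₁ : Integrable (fun p : E × E => f p.1) π :=
    (h₁ ▸ hf.integrable_of_integrable_norm hm).comp_measurable measurable_fst
  have hf₂ : Integrable (fun p : E × E => f p.2) π :=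
    (h₂ ▸ hf.integrable_of_integrable_norm hm').comp_measurable measurable_snd
  rw [← h₁, ← h₂,
    integral_map measurable_fst.aemeasurable (h₁ ▸ hf.continuous.aestronglyMeasurable),
    integral_map measurable_snd.aemeasurable (h₂ ▸ hf.continuous.aestronglyMeasurable),
    ← integral_sub hf₂ hf₁, ← integral_const_mul]
  refine norm_integral_le_of_norm_le ((integrable_dist_of_map_fst_snd h₁ h₂ hm hm').const_mul _)
    (.of_forall fun p => ?_)
  rw [dist_comm, ← dist_eq_norm]
  exact hf.dist_le_mul p.2 p.1

/-- Kantorovich duality, in the easy direction. -/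
theorem LipschitzWith.norm_integral_sub_le_mul_W1 (hf : LipschitzWith K f)
    [IsProbabilityMeasure m] [IsProbabilityMeasure m'] (hm : Integrable (fun x => ‖x‖) m)
    (hm' : Integrable (fun x => ‖x‖) m') :
    ‖∫ x, f x ∂m' - ∫ x, f x ∂m‖ ≤ K * W1 m m' :=
  le_mul_W1_of_forall_coupling fun _ h₁ h₂ =>
    hf.norm_integral_sub_le_of_map_fst_snd hm hm' h₁ h₂

end Wasserstein

theorem composite_cost_derivative_lipschitz_general
    (n N : ℕ) (φ : Fin N → EuclideanSpace ℝ (Fin n) → ℝ)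
    (Ψ : (Fin N → ℝ) → ℝ) (Kφ KΨ : ℝ≥0)
    (hφ : ∀ i, LipschitzWith Kφ (φ i))
    (hDΨ : LipschitzWith KΨ (fderiv ℝ Ψ))
    (m₁ m₂ m₃ m₄ : Measure (EuclideanSpace ℝ (Fin n)))
    [IsProbabilityMeasure m₁] [IsProbabilityMeasure m₂]
    [IsProbabilityMeasure m₃] [IsProbabilityMeasure m₄]
    (h₁ : Integrable (fun x => ‖x‖) m₁) (h₂ : Integrable (fun x => ‖x‖) m₂)
    (h₃ : Integrable (fun x => ‖x‖) m₃) (h₄ : Integrable (fun x => ‖x‖) m₄)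
    (Dχ : Measure (EuclideanSpace ℝ (Fin n)) → EuclideanSpace ℝ (Fin n) → ℝ)
    (hDχ : ∀ m x, Dχ m x = fderiv ℝ Ψ (fun i => ∫ y, φ i y ∂m) (fun i => φ i x)) :
    |((∫ x, Dχ m₂ x ∂m₄) - ∫ x, Dχ m₂ x ∂m₃)
        - ((∫ x, Dχ m₁ x ∂m₄) - ∫ x, Dχ m₁ x ∂m₃)|
      ≤ (KΨ : ℝ) * (Kφ : ℝ) ^ 2 * W1 m₁ m₂ * W1 m₃ m₄ := by
  set Φ : EuclideanSpace ℝ (Fin n) → Fin N → ℝ := fun x i => φ i x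
  have hΦ : LipschitzWith Kφ Φ := LipschitzWith.pi hφ
  have hmean : ∀ m [IsProbabilityMeasure m], Integrable (fun x => ‖x‖) m →
      (fun i => ∫ y, φ i y ∂m) = ∫ x, Φ x ∂m := fun m _ hm =>
    funext fun i => (eval_integral (fun i => (hφ i).integrable_of_integrable_norm hm) i).symm
  have hintegral_Dχ : ∀ (m : Measure _) [IsProbabilityMeasure m], Integrable (fun x => ‖x‖) m →
      ∀ (m' : Measure _) [IsProbabilityMeasure m'], Integrable (fun x => ‖x‖) m' →
      ∫ x, Dχ m x ∂m' = fderiv ℝ Ψ (∫ x, Φ x ∂m) (∫ x, Φ x ∂m') := by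
    intro m _ hm m' _ hm'
    simp_rw [hDχ, hmean m hm]
    exact (fderiv ℝ Ψ _).integral_comp_comm (hΦ.integrable_of_integrable_norm hm')
  rw [hintegral_Dχ m₂ h₂ m₄ h₄, hintegral_Dχ m₂ h₂ m₃ h₃, hintegral_Dχ m₁ h₁ m₄ h₄,
    hintegral_Dχ m₁ h₁ m₃ h₃, ← map_sub, ← map_sub, ← sub_apply, ← Real.norm_eq_abs]
  calc _ ≤ ‖fderiv ℝ Ψ (∫ x, Φ x ∂m₂) - fderiv ℝ Ψ (∫ x, Φ x ∂m₁)‖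
        * ‖∫ x, Φ x ∂m₄ - ∫ x, Φ x ∂m₃‖ := ContinuousLinearMap.le_opNorm _ _
    _ ≤ KΨ * ‖∫ x, Φ x ∂m₂ - ∫ x, Φ x ∂m₁‖ * (Kφ * W1 m₃ m₄) := by
      gcongr
      exacts [hDΨ.norm_sub_le _ _, hΦ.norm_integral_sub_le_mul_W1 h₃ h₄]
    _ ≤ KΨ * (Kφ * W1 m₁ m₂) * (Kφ * W1 m₃ m₄) := by
      gcongr
      · exact mul_nonneg Kφ.coe_nonneg (W1_nonneg m₃ m₄)
      · exact hΦ.norm_integral_sub_le_mul_W1 h₁ h₂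
    _ = KΨ * Kφ ^ 2 * W1 m₁ m₂ * W1 m₃ m₄ := by ring

/-- For `χ(m) = Ψ(∫φ₁ dm, …, ∫φ_N dm)` with each `φᵢ` being `K_φ`-Lipschitz and
`Ψ` having a `K_{DΨ}`-Lipschitz derivative, the derivative
`Dχ(m, x) = DΨ(∫φ dm)(φ(x))` satisfies
`|(Dχ(m₂) - Dχ(m₁))(m₄ - m₃)| ≤ K_{DΨ} K_φ² d₁(m₁,m₂) d₁(m₃,m₄)`. -/
theorem composite_cost_derivative_lipschitz
    (n N : ℕ) (φ : Fin N → EuclideanSpace ℝ (Fin n) → ℝ)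
    (Ψ : (Fin N → ℝ) → ℝ) (Kφ KΨ : ℝ≥0)
    (hφ : ∀ i, LipschitzWith Kφ (φ i))
    (hΨ : Differentiable ℝ Ψ)
    (hDΨ : LipschitzWith KΨ (fderiv ℝ Ψ))
    (m₁ m₂ m₃ m₄ : Measure (EuclideanSpace ℝ (Fin n)))
    [IsProbabilityMeasure m₁] [IsProbabilityMeasure m₂]
    [IsProbabilityMeasure m₃] [IsProbabilityMeasure m₄]
    (h₁ : Integrable (fun x => ‖x‖) m₁) (h₂ : Integrable (fun x => ‖x‖) m₂)
    (h₃ : Integrable (fun x => ‖x‖) m₃) (h₄ : Integrable (fun x => ‖x‖) m₄)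
    (Dχ : Measure (EuclideanSpace ℝ (Fin n)) → EuclideanSpace ℝ (Fin n) → ℝ)
    (hDχ : ∀ m x, Dχ m x = fderiv ℝ Ψ (fun i => ∫ y, φ i y ∂m) (fun i => φ i x)) :
    |((∫ x, Dχ m₂ x ∂m₄) - ∫ x, Dχ m₂ x ∂m₃)
        - ((∫ x, Dχ m₁ x ∂m₄) - ∫ x, Dχ m₁ x ∂m₃)|
      ≤ (KΨ : ℝ) * (Kφ : ℝ) ^ 2 * W1 m₁ m₂ * W1 m₃ m₄ :=
  composite_cost_derivative_lipschitz_general n N φ Ψ Kφ KΨ hφ hDΨ m₁ m₂ m₃ m₄ h₁ h₂ h₃ h₄ Dχ hDχ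
end

section
/- (CVaR dual reduction) For a probability measure m on ℝ with finite first moment and β ∈ (0,1), inf_{(ψ₀,ψ₁)∈ℝ²} { ∫ max(x−ψ₁, −ψ₀) dm(x) + βψ₀ + (1−β)ψ₁ } = inf_{ψ∈ℝ} { ∫ (x−ψ)₊ dm(x) + (1−β)ψ }. -/
open MeasureTheory

/-! Since `max (x - ψ₁) (-ψ₀) = (x - (ψ₁ - ψ₀))₊ - ψ₀`, the two-variable objective depends on
`(ψ₀, ψ₁)` only through `ψ₁ - ψ₀`, where it takes the value of the one-variable objective;
the two infima are therefore taken over the same set of values. -/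

theorem integral_max_sub_neg {m : Measure ℝ} [IsProbabilityMeasure m]
    (hm : Integrable (fun x : ℝ => x) m) (a b : ℝ) :
    ∫ x, max (x - b) (-a) ∂m = (∫ x, max (x - (b - a)) 0 ∂m) - a := by
  have hshift : ∀ x : ℝ, max (x - b) (-a) = max (x - (b - a)) 0 - a := fun x => by
    rw [← max_sub_sub_right, sub_sub, sub_add_cancel, zero_sub]
  have hpos : Integrable (fun x => max (x - (b - a)) 0) m :=
    (hm.sub (integrable_const _)).sup (integrable_const 0)
  simp_rw [hshift]
  rw [integral_sub hpos (integrable_const a), integral_const, probReal_univ, one_smul]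

theorem cvar_dual_reduction_general
    (m : Measure ℝ) [IsProbabilityMeasure m]
    (h : Integrable (fun x : ℝ => |x|) m)
    (β : ℝ) :
    (⨅ p : ℝ × ℝ, (∫ x, max (x - p.2) (-p.1) ∂m) + β * p.1 + (1 - β) * p.2)
      = ⨅ ψ : ℝ, (∫ x, max (x - ψ) 0 ∂m) + (1 - β) * ψ := by
  have hm : Integrable (fun x : ℝ => x) m :=
    (integrable_norm_iff (f := fun x : ℝ => x) aestronglyMeasurable_id).mp h
  have hsurj : Function.Surjective fun p : ℝ × ℝ => p.2 - p.1 :=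
    fun ψ => ⟨(0, ψ), sub_zero ψ⟩
  calc (⨅ p : ℝ × ℝ, (∫ x, max (x - p.2) (-p.1) ∂m) + β * p.1 + (1 - β) * p.2)
      = ⨅ p : ℝ × ℝ, (∫ x, max (x - (p.2 - p.1)) 0 ∂m) + (1 - β) * (p.2 - p.1) := by
        congr 1 with p
        rw [integral_max_sub_neg hm]
        ring
    _ = ⨅ ψ : ℝ, (∫ x, max (x - ψ) 0 ∂m) + (1 - β) * ψ :=
        hsurj.iInf_comp fun ψ => (∫ x, max (x - ψ) 0 ∂m) + (1 - β) * ψ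

/-- CVaR dual reduction: for a probability measure `m` on `ℝ` with finite first
moment and `β ∈ (0,1)`, the two-variable dual problem reduces to the
one-variable Rockafellar–Uryasev formula. -/
theorem cvar_dual_reduction
    (m : Measure ℝ) [IsProbabilityMeasure m]
    (h : Integrable (fun x : ℝ => |x|) m)
    (β : ℝ) (hβ : β ∈ Set.Ioo (0 : ℝ) 1) :
    (⨅ p : ℝ × ℝ, (∫ x, max (x - p.2) (-p.1) ∂m) + β * p.1 + (1 - β) * p.2)
      = ⨅ ψ : ℝ, (∫ x, max (x - ψ) 0 ∂m) + (1 - β) * ψ :=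
  cvar_dual_reduction_general m h β
end
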